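/- Let D be an ABAF and E a complete extension of the instantiated BAF F_D. If x = (S ⊢ p) ∈ A_D satisfies asms(x) = S ⊆ asms(E), then x ∈ E; in particular, for every a ∈ asms(E) the assumption argument {a} ⊢ a belongs to E, and if x ∈ E is derivation redundant with witness y = (S' ⊢ p), S' ⊊ S, then y ∈ E. -/
import Mathlib


/-! ## Bipolar argumentation frameworks (BAFs) -/

/-- A bipolar argumentation framework: a set of arguments together with
attack and support relations. -/
structure BAF (α : Type) where
  args : Set α
  att : Set (α × α)
  sup : Set (α × α)

namespace BAF

variable {α : Type} (F : BAF α)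

/-- The closure of a set of arguments: `cl(E) = E ∪ {a ∈ A | ∃ e ∈ E, (e,a) ∈ Sup}`. -/
def cl (E : Set α) : Set α := E ∪ {a ∈ F.args | ∃ e ∈ E, (e, a) ∈ F.sup}

/-- `E` is closed iff `E = cl(E)`. -/
def Closed (E : Set α) : Prop := E = F.cl E

/-- `E` is conflict-free iff no two members attack each other. -/
def ConflictFree (E : Set α) : Prop := ∀ x ∈ E, ∀ y ∈ E, (x, y) ∉ F.att

/-- `E` attacks the argument `a`. -/
def AttacksArg (E : Set α) (a : α) : Prop := ∃ e ∈ E, (e, a) ∈ F.att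

/-- `E` attacks the set `S` (i.e. some element of it). -/
def AttacksSet (E S : Set α) : Prop := ∃ a ∈ S, F.AttacksArg E a

/-- `E` defends `b` iff `E` attacks every closed set `S ⊆ args` attacking `b`. -/
def Defends (E : Set α) (b : α) : Prop :=
  ∀ S, S ⊆ F.args → F.Closed S → F.AttacksArg S b → F.AttacksSet E S

/-- The characteristic function `Γ(E) = {a ∈ A | E defends a}`. -/
def gamma (E : Set α) : Set α := {a ∈ F.args | F.Defends E a}

/-- `E` is admissible iff it is a closed, conflict-free set of arguments with `E ⊆ Γ(E)`. -/
def Admissible (E : Set α) : Prop :=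
  E ⊆ F.args ∧ F.Closed E ∧ F.ConflictFree E ∧ E ⊆ F.gamma E

/-- `E` is complete iff it is admissible and `E = Γ(E)`. -/
def Complete (E : Set α) : Prop := F.Admissible E ∧ E = F.gamma E

/-- `E` is preferred iff it is ⊆-maximal among complete sets. -/
def Preferred (E : Set α) : Prop := F.Complete E ∧ ∀ S, F.Complete S → E ⊆ S → S = E

/-- `E` is grounded iff it is admissible and equals the intersection of all complete
sets (taken to be `∅` when no complete set exists). -/
def Grounded (E : Set α) : Prop :=
  F.Admissible E ∧
    (((∃ S, F.Complete S) ∧ E = ⋂₀ {S | F.Complete S}) ∨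
      ((¬ ∃ S, F.Complete S) ∧ E = ∅))

/-- `E` is stable iff it is admissible and attacks every argument outside of it. -/
def Stable (E : Set α) : Prop :=
  F.Admissible E ∧ ∀ a ∈ F.args, a ∉ E → F.AttacksArg E a

/-- The BAF obtained by removing the argument `x`: the restriction to `args \ {x}`. -/
def remove (x : α) : BAF α where
  args := F.args \ {x}
  att := {p ∈ F.att | p.1 ≠ x ∧ p.2 ≠ x}
  sup := {p ∈ F.sup | p.1 ≠ x ∧ p.2 ≠ x}

end BAF

/-- The four complete-based semantics: complete, grounded, stable, preferred. -/
inductive Sem4 where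
  | com | grd | stb | prf

/-- The σ-extensions of a BAF, for σ among complete, grounded, stable, preferred. -/
def BAF.ext {α : Type} (F : BAF α) : Sem4 → Set α → Prop
  | .com => F.Complete
  | .grd => F.Grounded
  | .stb => F.Stable
  | .prf => F.Preferred

/-! ## Premise-augmented BAFs (pBAFs) -/

/-- A premise-augmented BAF: a BAF together with a premise function. -/
structure PBAF (α β : Type) where
  toBAF : BAF α
  prem : α → Set β

namespace PBAF

variable {α β : Type} (P : PBAF α β)

/-- The premises of a set of arguments: `prem(E) = ⋃ a ∈ E, prem(a)`. -/
def premSet (E : Set α) : Set β := ⋃ a ∈ E, P.prem a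

/-- `E` is exhaustive iff every argument whose premises are contained in `prem(E)`
belongs to `E`. -/
def Exhaustive (E : Set α) : Prop :=
  ∀ a ∈ P.toBAF.args, P.prem a ⊆ P.premSet E → a ∈ E

/-- `E` is admissible in a pBAF iff it is admissible in the underlying BAF and exhaustive. -/
def Admissible (E : Set α) : Prop := P.toBAF.Admissible E ∧ P.Exhaustive E

/-- `oldprf`: ⊆-maximal among the pBAF-admissible sets. -/
def OldPrf (E : Set α) : Prop := P.Admissible E ∧ ∀ S, P.Admissible S → E ⊆ S → S = E

/-- The pBAF obtained by removing the argument `x`. -/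
def remove (x : α) : PBAF α β := ⟨P.toBAF.remove x, P.prem⟩

end PBAF

/-- The six semantics for pBAFs: admissible, complete, oldprf, preferred, grounded, stable. -/
inductive Sem6 where
  | adm | com | oldprf | prf | grd | stb

/-- The σ-extensions of a pBAF. The complete, preferred, grounded and stable
sets are those of the underlying BAF. -/
def PBAF.ext {α β : Type} (P : PBAF α β) : Sem6 → Set α → Prop
  | .adm => P.Admissible
  | .com => P.toBAF.Complete
  | .oldprf => P.OldPrf
  | .prf => P.toBAF.Preferred
  | .grd => P.toBAF.Grounded
  | .stb => P.toBAF.Stable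

/-! ## Assumption-based argumentation frameworks (ABAFs) -/

/-- A rule, with a head atom and a finite body of atoms. -/
structure ABARule (α : Type) where
  head : α
  body : Finset α
deriving DecidableEq

/-- An assumption-based argumentation framework `(L, R, A, ‾)`. -/
structure ABAF (α : Type) [DecidableEq α] where
  L : Finset α
  R : Finset (ABARule α)
  A : Finset α
  A_nonempty : A.Nonempty
  A_sub_L : A ⊆ L
  contrary : α → α
  rules_wf : ∀ r ∈ R, r.head ∈ L ∧ r.body ⊆ L
  contrary_mem_L : ∀ a ∈ A, contrary a ∈ L

/-- Tree-based arguments: either a single assumption leaf, or an inner node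
(labeled with the head of a rule) with a list of child subtrees, one for each
body element of the rule.  (A node with the empty list of children represents
an application of a rule with empty body, i.e. a node whose single child is
labeled `⊤`.) -/
inductive ATree (α : Type) where
  | asm : α → ATree α
  | node : α → List (ATree α) → ATree α

namespace ATree

/-- The label of the root, i.e. the conclusion of the argument. -/
def root {α : Type} : ATree α → α
  | .asm a => a
  | .node p _ => p

/-- `t.IsAsmLeaf a` holds iff `a` is the label of some (assumption) leaf of `t`. -/
inductive IsAsmLeaf {α : Type} : ATree α → α → Prop
  | asm (a : α) : IsAsmLeaf (ATree.asm a) a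
  | node {p : α} {cs : List (ATree α)} {c : ATree α} {a : α} :
      c ∈ cs → IsAsmLeaf c a → IsAsmLeaf (ATree.node p cs) a

/-- The support of a tree-based argument: the set of its assumption leaf labels. -/
def asms {α : Type} (t : ATree α) : Set α := {a | t.IsAsmLeaf a}

/-- `Subarg t' t`: `t'` is a sub-argument (rooted labeled subtree whose leaves are
among the leaves) of `t`. -/
inductive Subarg {α : Type} : ATree α → ATree α → Prop
  | refl (t : ATree α) : Subarg t t
  | node {t c : ATree α} {p : α} {cs : List (ATree α)} :
      c ∈ cs → Subarg t c → Subarg t (ATree.node p cs)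

end ATree

namespace ABAF

/-- Well-formedness of a tree-based argument w.r.t. an ABAF `D`: assumption
leaves are labeled by assumptions, and each inner node is labeled by the head
of a rule of `D` and has exactly `|body(r)|` children whose roots are the
distinct elements of `body(r)`. -/
inductive WF {α : Type} [DecidableEq α] (D : ABAF α) : ATree α → Prop
  | asm {a : α} : a ∈ D.A → WF D (ATree.asm a)
  | node {p : α} {cs : List (ATree α)} (r : ABARule α) :
      r ∈ D.R → r.head = p →
      (cs.map ATree.root).Nodup →
      (cs.map ATree.root).toFinset = r.body →
      (∀ c ∈ cs, WF D c) →
      WF D (ATree.node p cs)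

variable {α : Type} [DecidableEq α] (D : ABAF α)

/-- `A_D`: the set of all tree-based arguments of `D`. -/
def argsSet : Set (ATree α) := {t | D.WF t}

/-- `Th_D(S)`: the conclusions derivable from (subsets of) `S`. -/
def Th (S : Set α) : Set α := {p | ∃ t, D.WF t ∧ t.root = p ∧ t.asms ⊆ S}

/-- `cl(S) = Th_D(S) ∩ A`. -/
def clA (S : Set α) : Set α := D.Th S ∩ ↑D.A

/-- An argument `S ⊢ p` is derivation redundant iff there is an argument
`S' ⊢ p ∈ A_D` with `S' ⊊ S`. -/
def DerivRedundant (x : ATree α) : Prop :=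
  ∃ y, D.WF y ∧ y.root = x.root ∧ y.asms ⊂ x.asms

/-- An argument `S ⊢ p` is expendable iff `p ∉ A ∪ {‾a | a ∈ A}`. -/
def Expendable (x : ATree α) : Prop :=
  x.root ∉ (↑D.A : Set α) ∪ D.contrary '' ↑D.A

/-- An argument `x = (S ⊢ p)` is assumption redundant iff it has a proper
sub-argument of the form `S' ⊢ a` with `S' ⊆ S` and `a ∈ A`. -/
def AsmRedundant (x : ATree α) : Prop :=
  ∃ t, ATree.Subarg t x ∧ t ≠ x ∧ t.asms ⊆ x.asms ∧ t.root ∈ D.A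

/-- The instantiated BAF `F_D` of an ABAF `D`. -/
def instBAF : BAF (ATree α) where
  args := {t | D.WF t}
  att := {p | D.WF p.1 ∧ D.WF p.2 ∧ ∃ b ∈ p.2.asms, p.1.root = D.contrary b}
  sup := {p | D.WF p.1 ∧ D.WF p.2 ∧
            ∃ a ∈ D.A, p.2 = ATree.asm a ∧ (a : α) ∈ D.clA p.1.asms}

/-- The instantiated pBAF `P_D` of an ABAF `D`, with `prem(S ⊢ p) = S`. -/
def instPBAF : PBAF (ATree α) α := ⟨D.instBAF, ATree.asms⟩

/-- The non-redundant arguments `A*_D`: obtained from `A_D` by removing all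
derivation redundant arguments, then all expendable arguments, then all
assumption redundant arguments. -/
def nonRedundant : Set (ATree α) :=
  {t | D.WF t ∧ ¬ D.DerivRedundant t ∧ ¬ D.Expendable t ∧ ¬ D.AsmRedundant t}

/-- The non-redundant core of `D`: the BAF whose arguments are the pairs
`(S, p)` for `S ⊢ p ∈ A*_D`, with the induced attack and support relations. -/
def core : BAF (Set α × α) where
  args := {x | ∃ t ∈ D.nonRedundant, x = (t.asms, t.root)}
  att := {p | ∃ b ∈ p.2.1, p.1.2 = D.contrary b}
  sup := {p | ∃ a ∈ D.A, p.2 = ({a}, a) ∧ (a : α) ∈ D.clA p.1.1}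

/-! ### ABA semantics on assumption sets -/

/-- `S` attacks `T` iff `‾b ∈ Th_D(S)` for some `b ∈ T`. -/
def SAttacks (S T : Set α) : Prop := ∃ b ∈ T, D.contrary b ∈ D.Th S

/-- `S` is conflict-free iff it does not attack itself. -/
def SConflictFree (S : Set α) : Prop := ¬ D.SAttacks S S

/-- `S` is closed iff `S = cl(S)`. -/
def SClosed (S : Set α) : Prop := S = D.clA S

/-- `S` defends `a` iff `S` attacks every closed `V ⊆ A` attacking `a`. -/
def SDefends (S : Set α) (a : α) : Prop :=
  ∀ V ⊆ (↑D.A : Set α), D.SClosed V → D.SAttacks V {a} → D.SAttacks S V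

/-- `S` is admissible iff it is a closed, conflict-free set of assumptions
defending each of its elements. -/
def SAdmissible (S : Set α) : Prop :=
  S ⊆ ↑D.A ∧ D.SClosed S ∧ D.SConflictFree S ∧ ∀ a ∈ S, D.SDefends S a

/-- `S` is complete iff it is admissible and contains every assumption it defends. -/
def SComplete (S : Set α) : Prop :=
  D.SAdmissible S ∧ ∀ a ∈ D.A, D.SDefends S a → a ∈ S

/-- `S` is preferred iff it is ⊆-maximal among complete sets. -/
def SPreferred (S : Set α) : Prop :=
  D.SComplete S ∧ ∀ T, D.SComplete T → S ⊆ T → T = S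

/-- `S` is grounded iff it is admissible and equal to the intersection of all
complete sets (taken to be `∅` when no complete set exists). -/
def SGrounded (S : Set α) : Prop :=
  D.SAdmissible S ∧
    (((∃ T, D.SComplete T) ∧ S = ⋂₀ {T | D.SComplete T}) ∨
      ((¬ ∃ T, D.SComplete T) ∧ S = ∅))

/-- `S` is stable iff it is admissible and attacks every assumption outside of it. -/
def SStable (S : Set α) : Prop :=
  D.SAdmissible S ∧ ∀ a ∈ D.A, (a : α) ∉ S → D.SAttacks S {a}

/-- ⊆-maximal admissible assumption sets (`oldprf` for ABAFs). -/
def SOldPrf (S : Set α) : Prop :=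
  D.SAdmissible S ∧ ∀ T, D.SAdmissible T → S ⊆ T → T = S

/-- The σ-extensions of an ABAF, σ among complete, grounded, stable, preferred. -/
def ext : Sem4 → Set α → Prop
  | .com => D.SComplete
  | .grd => D.SGrounded
  | .stb => D.SStable
  | .prf => D.SPreferred

/-- The σ-extensions of an ABAF, σ among admissible, complete, oldprf,
preferred, grounded, stable. -/
def ext6 : Sem6 → Set α → Prop
  | .adm => D.SAdmissible
  | .com => D.SComplete
  | .oldprf => D.SOldPrf
  | .prf => D.SPreferred
  | .grd => D.SGrounded
  | .stb => D.SStable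

end ABAF

/-- `asms(E)` for a set `E` of tree-based arguments. -/
def asmsOf {α : Type} (E : Set (ATree α)) : Set α := ⋃ x ∈ E, x.asms

/-- `asms(E)` for a set `E` of core arguments `(S, p)`. -/
def asmsOfCore {α : Type} (E : Set (Set α × α)) : Set α := ⋃ x ∈ E, x.1

/-- complete extensions of the instantiated BAF are assumption
exhaustive: any argument whose assumptions are contained in `asms(E)` belongs
to `E`; in particular all assumption arguments `{a} ⊢ a` for `a ∈ asms(E)`
belong to `E`, and witnesses of derivation redundant members of `E` belong
to `E`. -/
theorem complete_assumption_exhaustive {α : Type} [DecidableEq α]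
    (D : ABAF α) (E : Set (ATree α)) (hE : (D.instBAF).Complete E) :
    (∀ x, D.WF x → x.asms ⊆ asmsOf E → x ∈ E) ∧
    (∀ a, a ∈ asmsOf E → ATree.asm a ∈ E) ∧
    (∀ x ∈ E, ∀ y, D.WF y → y.root = x.root → y.asms ⊂ x.asms → y ∈ E) := by
  obtain ⟨⟨hsub, hcl, hcf, hadm⟩, hgam⟩ := hE
  have hleaf : ∀ {t : ATree α} {a : α}, ATree.IsAsmLeaf t a → D.WF t → a ∈ D.A := by
    intro t a h
    induction h with
    | asm a => intro hw; cases hw with | asm h => exact h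
    | node hc _ ih => intro hw; cases hw with | node r _ _ _ _ hcs => exact ih (hcs _ hc)
  have hmemAsms : ∀ {z : ATree α} {b : α}, z ∈ E → b ∈ z.asms → b ∈ asmsOf E := by
    intro z b hz hb
    simp only [asmsOf, Set.mem_iUnion]
    exact ⟨z, hz, hb⟩
  have key : ∀ x, D.WF x → x.asms ⊆ asmsOf E → x ∈ E := by
    intro x hwf hx
    rw [hgam]
    refine ⟨hwf, ?_⟩
    intro S hS hSc hSa
    obtain ⟨e, heS, hwe, _, b, hb, hroot⟩ := hSa
    have hbE : b ∈ asmsOf E := hx hb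
    simp only [asmsOf, Set.mem_iUnion] at hbE
    obtain ⟨z, hzE, hbz⟩ := hbE
    have hz : (D.instBAF).Defends E z := by
      have := hgam ▸ hzE
      exact this.2
    exact hz S hS hSc ⟨e, heS, hwe, hsub hzE, b, hbz, hroot⟩
  refine ⟨key, ?_, ?_⟩
  · intro a ha
    have ha' := ha
    simp only [asmsOf, Set.mem_iUnion] at ha'
    obtain ⟨z, hzE, hbz⟩ := ha'
    have haA : a ∈ D.A := hleaf hbz (hsub hzE)
    refine key _ (ABAF.WF.asm haA) ?_
    intro b hb
    cases hb
    exact ha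
  · intro x hx y hwy _ hsub'
    refine key y hwy (hsub'.subset.trans ?_)
    intro b hb
    exact hmemAsms hx hb
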